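/- For real symmetric positive definite n×n matrices A, B: Tr(√(√A·B·√A)) = max{Tr(K) : K ∈ ℝ^{n×n}, [[A, K],[Kᵀ, B]] ⪰ 0}. -/

import Mathlib

/-!
Let `G = A^{-1/2} (A^{1/2} B A^{1/2})^{1/2} A^{-1/2}` (the geometric mean of `A⁻¹` and `B`): it is
positive definite, `G A G = B`, and `Tr (A G) = Tr √(√A B √A)`. The value is attained at `K = A G`,
since then the block matrix is `[1 G]ᴴ A [1 G]`. Conversely `[[G, -1], [-1, G⁻¹]]` is
`[1 -G⁻¹]ᴴ G [1 -G⁻¹] ⪰ 0`, and the trace of its product with a feasible block matrix gives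
`0 ≤ Tr (A G) - 2 Tr K + Tr (B G⁻¹) = 2 Tr (A G) - 2 Tr K`.
-/

open Matrix BigOperators

open Classical in
noncomputable def msqrt {n : ℕ} (M : Matrix (Fin n) (Fin n) ℝ) : Matrix (Fin n) (Fin n) ℝ :=
  if h : M.PosSemidef then
    (h.1.eigenvectorUnitary : Matrix (Fin n) (Fin n) ℝ) *
      diagonal ((↑) ∘ (Real.sqrt ·) ∘ h.1.eigenvalues) *
      (star h.1.eigenvectorUnitary : Matrix (Fin n) (Fin n) ℝ)
  else 0

noncomputable def fnorm {n : ℕ} (A : Matrix (Fin n) (Fin n) ℝ) : ℝ :=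
  Real.sqrt (∑ i, ∑ j, (A i j) ^ 2)

open scoped MatrixOrder ComplexOrder

namespace Matrix

theorem trace_fromBlocks {l m R : Type*} [Fintype l] [Fintype m] [AddCommMonoid R]
    (A : Matrix l l R) (B : Matrix l m R) (C : Matrix m l R) (D : Matrix m m R) :
    (fromBlocks A B C D).trace = A.trace + D.trace := by
  simp [trace, Fintype.sum_sum_type]

variable {𝕜 l m p : Type*} [RCLike 𝕜] [Fintype m]

theorem PosSemidef.fromBlocks_conjTranspose_mul_mul [Finite l] [Finite p] {W : Matrix m m 𝕜}
    (hW : W.PosSemidef) (X : Matrix m l 𝕜) (Y : Matrix m p 𝕜) :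
    (fromBlocks (Xᴴ * W * X) (Xᴴ * W * Y) (Yᴴ * W * X) (Yᴴ * W * Y)).PosSemidef := by
  have := hW.conjTranspose_mul_mul_same (fromCols X Y)
  rwa [conjTranspose_fromCols_eq_fromRows_conjTranspose, fromRows_mul, fromRows_mul_fromCols]
    at this

variable [DecidableEq m]

theorem PosSemidef.trace_mul_nonneg {P Q : Matrix m m 𝕜} (hP : P.PosSemidef)
    (hQ : Q.PosSemidef) : 0 ≤ (P * Q).trace := by
  obtain ⟨X, rfl⟩ := CStarAlgebra.nonneg_iff_eq_star_mul_self.mp hQ.nonneg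
  rw [← mul_assoc, trace_mul_comm, ← mul_assoc]
  exact (hP.mul_mul_conjTranspose_same X).trace_nonneg

theorem PosDef.posSemidef_fromBlocks_neg_one_inv {G : Matrix m m 𝕜} (hG : G.PosDef) :
    (fromBlocks G (-1) (-1) G⁻¹).PosSemidef := by
  have hdet : IsUnit G.det := (isUnit_iff_isUnit_det G).mp hG.isUnit
  have := hG.posSemidef.fromBlocks_conjTranspose_mul_mul (1 : Matrix m m 𝕜) (-G⁻¹)
  simpa [hG.inv.1.eq, mul_nonsing_inv G hdet, nonsing_inv_mul G hdet, mul_assoc] using this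

theorem PosDef.cfcSqrt {A : Matrix m m 𝕜} (hA : A.PosDef) : (CFC.sqrt A).PosDef :=
  (IsStrictlyPositive.sqrt A hA.isStrictlyPositive).posDef

theorem PosDef.cfcSqrt_mul_mul_cfcSqrt {A B : Matrix m m 𝕜} (hA : A.PosDef) (hB : B.PosDef) :
    (CFC.sqrt A * B * CFC.sqrt A).PosDef := by
  have := hB.conjTranspose_mul_mul_same (mulVec_injective_iff_isUnit.mpr hA.cfcSqrt.isUnit)
  rwa [hA.cfcSqrt.1.eq] at this

theorem two_mul_trace_le_of_posSemidef_fromBlocks {A B K G : Matrix m m ℝ}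
    (hP : (fromBlocks A K Kᵀ B).PosSemidef) (hG : G.PosDef) :
    2 * K.trace ≤ (A * G).trace + (B * G⁻¹).trace := by
  have := hP.trace_mul_nonneg hG.posSemidef_fromBlocks_neg_one_inv
  rw [fromBlocks_multiply, trace_fromBlocks] at this
  simp only [mul_neg, mul_one, trace_add, trace_neg, trace_transpose] at this
  linarith

theorem isGreatest_trace_of_mul_mul_eq {A B G : Matrix m m ℝ} (hA : A.PosSemidef)
    (hG : G.PosDef) (hGAG : G * A * G = B) :
    IsGreatest {t : ℝ | ∃ K : Matrix m m ℝ, (fromBlocks A K Kᵀ B).PosSemidef ∧ t = K.trace}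
      (A * G).trace := by
  refine ⟨⟨A * G, ?_, rfl⟩, ?_⟩
  · have := hA.fromBlocks_conjTranspose_mul_mul (1 : Matrix m m ℝ) G
    rw [conjTranspose_one, hG.1.eq, Matrix.one_mul, Matrix.mul_one, Matrix.mul_one, hGAG] at this
    rwa [transpose_mul, show Aᵀ = A from hA.1.eq, show Gᵀ = G from hG.1.eq]
  · rintro t ⟨K, hK, rfl⟩
    have hle := two_mul_trace_le_of_posSemidef_fromBlocks hK hG
    have : (B * G⁻¹).trace = (A * G).trace := by
      rw [← hGAG, mul_nonsing_inv_cancel_right _ _ ((isUnit_iff_isUnit_det G).mp hG.isUnit),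
        trace_mul_comm]
    linarith

theorem exists_posDef_mul_mul_eq {A B : Matrix m m ℝ} (hA : A.PosDef) (hB : B.PosDef) :
    ∃ G : Matrix m m ℝ, G.PosDef ∧ G * A * G = B ∧
      (A * G).trace = (CFC.sqrt (CFC.sqrt A * B * CFC.sqrt A)).trace := by
  set T := CFC.sqrt A
  set S := CFC.sqrt (T * B * T)
  have hT : T.PosDef := hA.cfcSqrt
  have hTdet : IsUnit T.det := (isUnit_iff_isUnit_det T).mp hT.isUnit
  have hTB : (T * B * T).PosDef := hA.cfcSqrt_mul_mul_cfcSqrt hB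
  have hS : S.PosDef := hTB.cfcSqrt
  have hTT : T * T = A := CFC.sqrt_mul_sqrt_self A hA.posSemidef.nonneg
  have hSS : S * S = T * B * T := CFC.sqrt_mul_sqrt_self _ hTB.posSemidef.nonneg
  refine ⟨T⁻¹ * S * T⁻¹, ?_, ?_, ?_⟩
  · have := hS.conjTranspose_mul_mul_same (mulVec_injective_iff_isUnit.mpr hT.inv.isUnit)
    rwa [hT.inv.1.eq] at this
  · calc T⁻¹ * S * T⁻¹ * A * (T⁻¹ * S * T⁻¹) = T⁻¹ * (S * S) * T⁻¹ := by
          rw [← hTT]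
          simp only [mul_assoc, nonsing_inv_mul_cancel_left _ _ hTdet,
            mul_nonsing_inv_cancel_left _ _ hTdet]
      _ = B := by
          rw [hSS]
          simp only [mul_assoc, nonsing_inv_mul_cancel_left _ _ hTdet, mul_nonsing_inv _ hTdet,
            mul_one]
  · calc (A * (T⁻¹ * S * T⁻¹)).trace = (T * S * T⁻¹).trace := by
          rw [← hTT]; simp only [mul_assoc, mul_nonsing_inv_cancel_left _ _ hTdet]
      _ = S.trace := by rw [trace_mul_comm, nonsing_inv_mul_cancel_left _ _ hTdet]

end Matrix

theorem msqrt_eq_cfcSqrt {n : ℕ} {M : Matrix (Fin n) (Fin n) ℝ} (hM : M.PosSemidef) :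
    msqrt M = CFC.sqrt M := by
  rw [msqrt, dif_pos hM, CFC.sqrt_eq_cfc, cfc_nnreal_eq_real _ M, hM.1.cfc_eq, IsHermitian.cfc]
  congr 3
  funext i
  simp [hM.eigenvalues_nonneg i]

theorem stmt_18 {n : ℕ} (A B : Matrix (Fin n) (Fin n) ℝ)
    (hA : A.PosDef) (hB : B.PosDef) :
    IsGreatest {t : ℝ | ∃ K : Matrix (Fin n) (Fin n) ℝ,
        (Matrix.fromBlocks A K Kᵀ B).PosSemidef ∧ t = K.trace}
      (msqrt (msqrt A * B * msqrt A)).trace := by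
  obtain ⟨G, hG, hGAG, htrace⟩ := exists_posDef_mul_mul_eq hA hB
  rw [msqrt_eq_cfcSqrt hA.posSemidef, msqrt_eq_cfcSqrt (hA.cfcSqrt_mul_mul_cfcSqrt hB).posSemidef,
    ← htrace]
  exact isGreatest_trace_of_mul_mul_eq hA.posSemidef hG hGAG
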